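/- Let n ≥ 1 and let λ ∈ ℂ with λ ≠ 0. Then: (a) φ_n(λ) = 0 and φ*_n(λ) = 0 cannot both hold (φ_n and its reversed polynomial have no common nonzero zero); (b) if φ_n(λ) = 0, then K_{n−1}(λ, conj(λ)^{−1}) = 0 if and only if λ is a zero of φ_n of multiplicity at least 2. -/

import Mathlib

open LaurentPolynomial Polynomial Complex ComplexConjugate

noncomputable section

/-- Reversed polynomial with conjugated coefficients: p*(z) = Σ conj(c_{m-k}) z^k. -/
def revc (p : Polynomial ℂ) : Polynomial ℂ := (p.map (starRingEnd ℂ)).reverse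

/-- Monic orthogonal polynomials from Schur parameters: φ_0 = 1,
φ_n = z φ_{n-1} + a_n φ*_{n-1}. -/
def phi (a : ℕ → ℂ) : ℕ → Polynomial ℂ
  | 0 => 1
  | n + 1 => X * phi a n + Polynomial.C (a (n + 1)) * revc (phi a n)

/-- ρ_n := |1 - |a_n|²|^{1/2}. -/
def rho (a : ℕ → ℂ) (n : ℕ) : ℝ := Real.sqrt |1 - ‖a n‖ ^ 2|

/-- ε_n := sgn (1 - |a_n|²). -/
def sgn (a : ℕ → ℂ) (n : ℕ) : ℝ := Real.sign (1 - ‖a n‖ ^ 2)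

/-- ρ̂_n := ε_n ρ_n. -/
def rhoh (a : ℕ → ℂ) (n : ℕ) : ℝ := sgn a n * rho a n

/-- κ_n := Π_{k=1}^n ρ_k⁻¹ (κ_0 = 1). -/
def kap (a : ℕ → ℂ) (n : ℕ) : ℝ := ∏ k ∈ Finset.Icc 1 n, (rho a k)⁻¹

/-- e_n := Π_{k=1}^n ε_k (e_0 = 1). -/
def esgn (a : ℕ → ℂ) (n : ℕ) : ℝ := ∏ k ∈ Finset.Icc 1 n, sgn a k

/-- Orthonormal polynomials φ̂_n := κ_n φ_n. -/
def phin (a : ℕ → ℂ) (n : ℕ) : Polynomial ℂ := Polynomial.C ((kap a n : ℝ) : ℂ) * phi a n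

/-- Standard right orthonormal Laurent polynomials:
χ_{2m} = z^{-m} φ̂*_{2m}, χ_{2m+1} = z^{-m} φ̂_{2m+1}. -/
def chi (a : ℕ → ℂ) (n : ℕ) : LaurentPolynomial ℂ :=
  T (-((n / 2 : ℕ) : ℤ)) * (if Even n then revc (phin a n) else phin a n).toLaurent

/-- The kernel K_n(z,y) := Σ_{k=0}^n e_k φ̂_k(z) conj(φ̂_k(y)). -/
def Kker (a : ℕ → ℂ) (n : ℕ) (z y : ℂ) : ℂ :=
  ∑ k ∈ Finset.range (n + 1),
    ((esgn a k : ℝ) : ℂ) * (phin a k).eval z * conj ((phin a k).eval y)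

/-- Entries of the five-diagonal matrix, with rows/columns indexed from 1. -/
def Fent (a : ℕ → ℂ) (i j : ℕ) : ℂ :=
  if i = 1 then
    if j = 1 then -a 1 else if j = 2 then (rho a 1 : ℂ) else 0
  else if i % 2 = 0 then
    if j + 1 = i then -(rhoh a (i - 1) : ℂ) * a i
    else if j = i then -conj (a (i - 1)) * a i
    else if j = i + 1 then -(rho a i : ℂ) * a (i + 1)
    else if j = i + 2 then (rho a i : ℂ) * (rho a (i + 1) : ℂ)
    else 0
  else
    if j + 2 = i then (rhoh a (i - 2) : ℂ) * (rhoh a (i - 1) : ℂ)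
    else if j + 1 = i then conj (a (i - 2)) * (rhoh a (i - 1) : ℂ)
    else if j = i then -conj (a (i - 1)) * a i
    else if j = i + 1 then conj (a (i - 1)) * (rho a i : ℂ)
    else 0

/-- The n×n five-diagonal matrix ℱ_n. -/
def Fmat (a : ℕ → ℂ) (n : ℕ) : Matrix (Fin n) (Fin n) ℂ :=
  Matrix.of fun i j => Fent a (i.val + 1) (j.val + 1)

/-- Evaluation of a Laurent polynomial at a nonzero complex number. -/
def levalAt (z : ℂ) (f : LaurentPolynomial ℂ) : ℂ :=
  Finsupp.sum f.coeff fun k c => c * z ^ k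

/-!
When `|a| ≠ 1` the Szegő recursion `φₖ₊₁ = z φₖ + a φₖ*`, `φₖ₊₁* = φₖ* + ā z φₖ` can be run
backwards, so a common zero `λ ≠ 0` of `φₙ` and `φₙ*` would be a common zero of `φ₀ = 1` and
`φ₀* = 1`.

Since `φₖ*(λ) = λᵏ conj (φₖ (conj λ)⁻¹)`, we get
`λⁿ⁻¹ Kₙ₋₁(λ, (conj λ)⁻¹) = ∑ₖ eₖ κₖ² λⁿ⁻¹⁻ᵏ φₖ(λ) φₖ*(λ)`, and the confluent
Christoffel–Darboux formula identifies this with `eₙ κₙ² W(φₙ*, φₙ)(λ)`, `W` the Wronskian.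
At a zero of `φₙ` this is `eₙ κₙ² φₙ*(λ) φₙ'(λ)`, and `φₙ*(λ) ≠ 0` by the first part.
-/

lemma natDegree_revc_le (p : ℂ[X]) : (revc p).natDegree ≤ p.natDegree :=
  (reverse_natDegree_le _).trans (natDegree_map_eq_of_injective (starRingEnd ℂ).injective p).le

lemma revc_eq_reflect {p : ℂ[X]} {n : ℕ} (hp : p.natDegree = n) :
    revc p = reflect n (p.map (starRingEnd ℂ)) := by
  rw [revc, reverse, natDegree_map_eq_of_injective (starRingEnd ℂ).injective, hp]

lemma map_conj_revc {p : ℂ[X]} {n : ℕ} (hp : p.natDegree = n) :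
    (revc p).map (starRingEnd ℂ) = reflect n p := by
  have hinvol : (starRingEnd ℂ).comp (starRingEnd ℂ) = RingHom.id ℂ :=
    RingHom.ext starRingEnd_self_apply
  rw [revc_eq_reflect hp, ← reflect_map, Polynomial.map_map, hinvol, Polynomial.map_id]

lemma reflect_succ_X_mul {p : ℂ[X]} {n : ℕ} (hp : p.natDegree ≤ n) :
    reflect (n + 1) (X * p) = reflect n p := by
  rw [add_comm, reflect_mul X p natDegree_X_le hp, reflect_one_X, one_mul]

lemma revc_one : revc 1 = 1 := by
  rw [revc, Polynomial.map_one, ← C_1, reverse_C]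

lemma eval_revc (p : ℂ[X]) {z : ℂ} (hz : z ≠ 0) :
    (revc p).eval z = z ^ p.natDegree * conj (p.eval (conj z)⁻¹) := by
  let := invertibleOfNonzero (inv_ne_zero hz)
  have h := eval₂_reverse_mul_pow (RingHom.id ℂ) z⁻¹ (p.map (starRingEnd ℂ))
  rw [invOf_eq_inv, inv_inv, natDegree_map_eq_of_injective (starRingEnd ℂ).injective,
    eval₂_id, eval₂_id] at h
  rw [← map_inv₀, ← eval_map_apply, starRingEnd_self_apply, ← h, inv_pow, mul_comm,
    inv_mul_cancel_right₀ (pow_ne_zero _ hz), revc]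

lemma phi_monic_natDegree (a : ℕ → ℂ) (n : ℕ) :
    (phi a n).Monic ∧ (phi a n).natDegree = n := by
  induction n with
  | zero => exact ⟨monic_one, natDegree_one⟩
  | succ n ih =>
    obtain ⟨hmonic, hdeg⟩ := ih
    have hXdeg : (X * phi a n).natDegree = n + 1 := by
      rw [natDegree_X_mul hmonic.ne_zero, hdeg]
    have hlt : (Polynomial.C (a (n + 1)) * revc (phi a n)).degree < (X * phi a n).degree :=
      degree_lt_degree <| calc
        _ ≤ (revc (phi a n)).natDegree := natDegree_C_mul_le _ _
        _ ≤ (phi a n).natDegree := natDegree_revc_le _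
        _ = n := hdeg
        _ < _ := hXdeg ▸ n.lt_succ_self
    exact ⟨(monic_X.mul hmonic).add_of_left hlt,
      (natDegree_add_eq_left_of_degree_lt hlt).trans hXdeg⟩

lemma revc_phi_succ (a : ℕ → ℂ) (n : ℕ) :
    revc (phi a (n + 1)) = revc (phi a n) + Polynomial.C (conj (a (n + 1))) * (X * phi a n) := by
  have hdeg := (phi_monic_natDegree a n).2
  have hmap : (phi a (n + 1)).map (starRingEnd ℂ) =
      X * (phi a n).map (starRingEnd ℂ) +
        Polynomial.C (conj (a (n + 1))) * reflect n (phi a n) := by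
    rw [phi, Polynomial.map_add, Polynomial.map_mul, Polynomial.map_mul, Polynomial.map_X,
      Polynomial.map_C, map_conj_revc hdeg]
  rw [revc_eq_reflect (phi_monic_natDegree a (n + 1)).2, hmap, reflect_add, reflect_C_mul,
    reflect_succ_X_mul (by rw [natDegree_map_eq_of_injective (starRingEnd ℂ).injective, hdeg]),
    ← revc_eq_reflect hdeg, ← reflect_succ_X_mul hdeg.le, reflect_reflect]

lemma wronskian_revc_phi_succ (a : ℕ → ℂ) (n : ℕ) :
    wronskian (revc (phi a (n + 1))) (phi a (n + 1)) =
      Polynomial.C (1 - a (n + 1) * conj (a (n + 1))) *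
        (phi a n * revc (phi a n) + X * wronskian (revc (phi a n)) (phi a n)) := by
  rw [revc_phi_succ, phi]
  simp only [wronskian, derivative_add, derivative_mul, derivative_X, derivative_C, map_sub,
    map_mul, map_one]
  ring

theorem christoffel_darboux_confluent (a : ℕ → ℂ) (c : ℕ → ℂ)
    (hc : ∀ k, c (k + 1) * (1 - a (k + 1) * conj (a (k + 1))) = c k) (m : ℕ) :
    ∑ k ∈ Finset.range (m + 1), Polynomial.C (c k) * X ^ (m - k) * (phi a k * revc (phi a k)) =
      Polynomial.C (c (m + 1)) * wronskian (revc (phi a (m + 1))) (phi a (m + 1)) := by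
  induction m with
  | zero =>
    have hphi0 : phi a 0 = 1 := rfl
    rw [wronskian_revc_phi_succ, Finset.sum_range_one, hphi0, revc_one, wronskian_self_eq_zero,
      ← hc 0, map_mul]
    ring
  | succ m ih =>
    have hshift : ∑ k ∈ Finset.range (m + 1),
        Polynomial.C (c k) * X ^ (m + 1 - k) * (phi a k * revc (phi a k)) =
        X * ∑ k ∈ Finset.range (m + 1),
          Polynomial.C (c k) * X ^ (m - k) * (phi a k * revc (phi a k)) := by
      rw [Finset.mul_sum]
      refine Finset.sum_congr rfl fun k hk => ?_
      rw [Nat.sub_add_comm (Finset.mem_range_succ_iff.mp hk), pow_succ]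
      ring
    rw [Finset.sum_range_succ, hshift, ih, wronskian_revc_phi_succ (n := m + 1), Nat.sub_self,
      pow_zero, ← hc (m + 1), map_mul]
    ring

lemma one_sub_norm_sq_ne_zero {E : Type*} [SeminormedAddGroup E] {x : E} (hx : ‖x‖ ≠ 1) :
    1 - ‖x‖ ^ 2 ≠ 0 := by
  rw [sub_ne_zero, ne_comm, Ne, pow_eq_one_iff_of_nonneg (norm_nonneg x) two_ne_zero]
  exact hx

lemma esgn_mul_kap_sq (a : ℕ → ℂ) (n : ℕ) :
    esgn a n * kap a n ^ 2 = ∏ k ∈ Finset.Icc 1 n, (1 - ‖a k‖ ^ 2)⁻¹ := by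
  have sign_mul_inv_sqrt_abs_sq (x : ℝ) : Real.sign x * (√|x|)⁻¹ ^ 2 = x⁻¹ := by
    rw [inv_pow, Real.sq_sqrt (abs_nonneg x)]
    rcases lt_trichotomy x 0 with hx | rfl | hx
    · rw [Real.sign_of_neg hx, abs_of_neg hx, inv_neg, neg_one_mul, neg_neg]
    · simp
    · rw [Real.sign_of_pos hx, abs_of_pos hx, one_mul]
  rw [esgn, kap, ← Finset.prod_pow, ← Finset.prod_mul_distrib]
  exact Finset.prod_congr rfl fun k _ => sign_mul_inv_sqrt_abs_sq _

lemma esgn_mul_kap_sq_ne_zero {a : ℕ → ℂ} (ha : ∀ n, 1 ≤ n → ‖a n‖ ≠ 1) (n : ℕ) :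
    esgn a n * kap a n ^ 2 ≠ 0 := by
  rw [esgn_mul_kap_sq, Finset.prod_ne_zero_iff]
  exact fun k hk => inv_ne_zero (one_sub_norm_sq_ne_zero (ha k (Finset.mem_Icc.mp hk).1))

lemma esgn_mul_kap_sq_succ {a : ℕ → ℂ} {n : ℕ} (ha : ‖a (n + 1)‖ ≠ 1) :
    esgn a (n + 1) * kap a (n + 1) ^ 2 * (1 - ‖a (n + 1)‖ ^ 2) = esgn a n * kap a n ^ 2 := by
  rw [esgn_mul_kap_sq, esgn_mul_kap_sq, Finset.prod_Icc_succ_top (by omega), mul_assoc,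
    inv_mul_cancel₀ (one_sub_norm_sq_ne_zero ha), mul_one]

lemma pow_mul_Kker_inv_conj (a : ℕ → ℂ) (m : ℕ) {z : ℂ} (hz : z ≠ 0) :
    z ^ m * Kker a m z (conj z)⁻¹ = ∑ k ∈ Finset.range (m + 1),
      ((esgn a k * kap a k ^ 2 : ℝ) : ℂ) * z ^ (m - k) *
        ((phi a k).eval z * (revc (phi a k)).eval z) := by
  rw [Kker, Finset.mul_sum]
  refine Finset.sum_congr rfl fun k hk => ?_
  rw [eval_revc _ hz, (phi_monic_natDegree a k).2, phin, eval_mul, eval_mul, eval_C, eval_C,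
    map_mul, conj_ofReal, ← pow_sub_mul_pow z (Finset.mem_range_succ_iff.mp hk)]
  push_cast
  ring

lemma not_eval_phi_eq_zero_and_eval_revc_eq_zero {a : ℕ → ℂ} (ha : ∀ n, 1 ≤ n → ‖a n‖ ≠ 1)
    (n : ℕ) {z : ℂ} (hz : z ≠ 0) : ¬((phi a n).eval z = 0 ∧ (revc (phi a n)).eval z = 0) := by
  induction n with
  | zero => simp [phi, revc_one]
  | succ n ih =>
    rintro ⟨hP, hQ⟩
    rw [revc_phi_succ] at hQ
    rw [phi] at hP
    simp only [eval_add, eval_mul, eval_C, eval_X] at hP hQ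
    have hnorm : (1 : ℂ) - a (n + 1) * conj (a (n + 1)) ≠ 0 := by
      rw [mul_conj']
      exact_mod_cast one_sub_norm_sq_ne_zero (ha (n + 1) n.succ_pos)
    have hP' : (1 - a (n + 1) * conj (a (n + 1))) * (z * (phi a n).eval z) = 0 := by
      linear_combination hP - a (n + 1) * hQ
    have hQ' : (1 - a (n + 1) * conj (a (n + 1))) * (revc (phi a n)).eval z = 0 := by
      linear_combination hQ - conj (a (n + 1)) * hP
    exact ih ⟨(mul_eq_zero.mp ((mul_eq_zero.mp hP').resolve_left hnorm)).resolve_left hz,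
      (mul_eq_zero.mp hQ').resolve_left hnorm⟩

/-- Remark 4.1: (a) φ_n and its reversed polynomial φ*_n have no
common nonzero zero; (b) for a nonzero zero λ of φ_n, the kernel value
K_{n−1}(λ, conj(λ)⁻¹) vanishes iff λ is a multiple zero of φ_n. -/
theorem kernel_zero_iff_multiple_zero
    (a : ℕ → ℂ) (ha : ∀ n, 1 ≤ n → ‖a n‖ ≠ 1)
    (n : ℕ) (hn : 1 ≤ n) (lam : ℂ) (hlam : lam ≠ 0) :
    ¬((phi a n).eval lam = 0 ∧ (revc (phi a n)).eval lam = 0) ∧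
    ((phi a n).eval lam = 0 →
      (Kker a (n - 1) lam ((conj lam)⁻¹) = 0 ↔
        2 ≤ Polynomial.rootMultiplicity lam (phi a n))) := by
  have hcommon := not_eval_phi_eq_zero_and_eval_revc_eq_zero ha n hlam
  refine ⟨hcommon, fun hroot => ?_⟩
  obtain ⟨m, rfl⟩ : ∃ m, n = m + 1 := ⟨n - 1, by omega⟩
  set c : ℕ → ℂ := fun k => ((esgn a k * kap a k ^ 2 : ℝ) : ℂ)
  have hc (k : ℕ) : c (k + 1) * (1 - a (k + 1) * conj (a (k + 1))) = c k := by
    simp only [c, mul_conj']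
    exact_mod_cast esgn_mul_kap_sq_succ (ha (k + 1) k.succ_pos)
  have hK : lam ^ m * Kker a m lam (conj lam)⁻¹ =
      c (m + 1) * ((revc (phi a (m + 1))).eval lam * (derivative (phi a (m + 1))).eval lam) := by
    have hCD := congrArg (eval lam) (christoffel_darboux_confluent a c hc m)
    simp only [eval_finsetSum, eval_mul, eval_C, eval_pow, eval_X, wronskian, eval_sub, hroot,
      mul_zero, sub_zero] at hCD
    rw [pow_mul_Kker_inv_conj a m hlam, hCD]
  rw [Nat.add_sub_cancel, ← mul_right_inj' (pow_ne_zero m hlam), hK, mul_zero, mul_eq_zero,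
    mul_eq_zero, or_iff_right (ofReal_ne_zero.mpr (esgn_mul_kap_sq_ne_zero ha (m + 1))),
    or_iff_right fun h => hcommon ⟨hroot, h⟩]
  change _ ↔ 1 < _
  rw [one_lt_rootMultiplicity_iff_isRoot (phi_monic_natDegree a (m + 1)).1.ne_zero]
  exact ⟨fun h => ⟨hroot, h⟩, And.right⟩
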